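/- Let κ ∈ ℂ with κ ≠ 2, let φ be a Fricke trace map of level κ, and suppose λ ∈ ℰ(φ) with λ ∉ ℚ̂ (an irrational end invariant). Then there exists a sequence of pairwise distinct elements Z_n ∈ ℚ̂ with Z_n → λ in ℝ̂ and |φ(Z_n)| ≤ 2 for all n. -/

import Mathlib

open Filter Topology

noncomputable section

namespace TWZ

/-- `ℚ̂ = ℚ ∪ {∞}`, modeling essential simple closed curves on the one-holed torus. -/
abbrev QHat := OnePoint ℚ

/-- `ℝ̂ = ℝ ∪ {∞}`, the circle (one-point compactification of `ℝ`),
modeling the projective lamination space. -/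
abbrev RHat := OnePoint ℝ

/-- Numerator of an extended rational, with `∞ = 1/0`. -/
def qnum (x : QHat) : ℤ := @Option.elim ℚ ℤ x 1 Rat.num

/-- Denominator of an extended rational, with `∞ = 1/0`. -/
def qden (x : QHat) : ℤ := @Option.elim ℚ ℤ x 0 (fun q => (q.den : ℤ))

/-- The natural inclusion `ℚ̂ → ℝ̂`. -/
def toRHat (x : QHat) : RHat := @Option.map ℚ ℝ (fun q => (q : ℝ)) x

/-- Farey neighbors: `p/q` and `r/s` (in lowest terms) with `|ps - qr| = 1`. -/
def FareyNbr (a b : QHat) : Prop := |qnum a * qden b - qnum b * qden a| = 1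

/-- A Farey triangle: three pairwise Farey neighbors. -/
def FareyTriangle (x y z : QHat) : Prop := FareyNbr x y ∧ FareyNbr y z ∧ FareyNbr x z

/-- A Fricke trace map of level `κ`: the vertex relation on Farey triangles and
the edge relation on Farey edges with their two opposite vertices. -/
def IsFricke (κ : ℂ) (φ : QHat → ℂ) : Prop :=
  (∀ x y z : QHat, FareyTriangle x y z →
    φ x ^ 2 + φ y ^ 2 + φ z ^ 2 - φ x * φ y * φ z - 2 = κ) ∧
  (∀ x y z z' : QHat, FareyTriangle x y z → FareyTriangle x y z' → z ≠ z' →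
    φ z + φ z' = φ x * φ y)

/-- `lam ∈ ℝ̂` is an end invariant of `φ` : there are `K > 0` and pairwise distinct
`X_n ∈ ℚ̂` with `X_n → lam` and `|φ (X_n)| ≤ K` for all `n`. -/
def IsEndInv (φ : QHat → ℂ) (lam : RHat) : Prop :=
  ∃ K : ℝ, 0 < K ∧ ∃ s : ℕ → QHat, Function.Injective s ∧
    Tendsto (fun n => toRHat (s n)) atTop (nhds lam) ∧
    ∀ n, ‖φ (s n)‖ ≤ K

/-- The set `ℰ(φ) ⊆ ℝ̂` of end invariants of `φ`. -/
def endInvs (φ : QHat → ℂ) : Set RHat := {lam | IsEndInv φ lam}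

/-- `φ` is dihedral: it vanishes on two of the three vertices of some Farey triangle. -/
def IsDihedral (φ : QHat → ℂ) : Prop :=
  ∃ x y z : QHat, FareyTriangle x y z ∧ φ x = 0 ∧ φ y = 0

/-- `φ` is of SU(2) type: all values are real and lie in `[-2, 2]`. -/
def IsSU2Type (φ : QHat → ℂ) : Prop :=
  ∀ x : QHat, ∃ r : ℝ, -2 ≤ r ∧ r ≤ 2 ∧ φ x = r

/-- `φ` is real: all its values are real. -/
def IsRealMap (φ : QHat → ℂ) : Prop := ∀ x : QHat, ∃ r : ℝ, φ x = r

/-- The extended BQ-conditions on a subset `S ⊆ ℚ̂`: no value on `S` lies in the real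
open interval `(-2,2)`, and only finitely many values on `S` have absolute value `≤ 2`. -/
def ExtendedBQ (φ : QHat → ℂ) (S : Set QHat) : Prop :=
  (∀ x ∈ S, ¬ ∃ r : ℝ, -2 < r ∧ r < 2 ∧ φ x = r) ∧
  {x ∈ S | ‖φ x‖ ≤ 2}.Finite

/-- A Cantor subset of `ℝ̂`: nonempty, compact, perfect and totally disconnected. -/
def IsCantorSet (C : Set RHat) : Prop :=
  C.Nonempty ∧ IsCompact C ∧ Perfect C ∧ IsTotallyDisconnected C

/-- Parity class odd/odd. -/
def classOO : Set QHat := {x | Odd (qnum x) ∧ Odd (qden x)}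

/-- Parity class even/odd. -/
def classEO : Set QHat := {x | Even (qnum x) ∧ Odd (qden x)}

/-- Parity class odd/even. -/
def classOE : Set QHat := {x | Odd (qnum x) ∧ Even (qden x)}

/-- `φ` is imaginary: not dihedral, real on one of the three parity classes and
purely imaginary on the other two. -/
def IsImaginary (φ : QHat → ℂ) : Prop :=
  ¬ IsDihedral φ ∧
  ∃ S ∈ ({classOO, classEO, classOE} : Set (Set QHat)),
    (∀ x ∈ S, (φ x).im = 0) ∧ (∀ x ∉ S, (φ x).re = 0)

/-!
Descend the Farey tessellation toward `λ` (Stern–Brocot) and suppose that `|φ| > 2` at every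
rational near `λ`, so that from some step on every edge of the descent carries two values of
modulus `> 2`. The edge relation gives `|φ(mediant)| ≥ |φ(X)| |φ(Y)| - |φ(behind)|`.

If at some step the vertex left behind is no larger than the edge being crossed, this inequality
propagates (Bowditch): the edge maxima grow linearly, and `|φ|` exceeds the current edge maximum
at every rational inside the current interval. The bounded sequence `X_n → λ` eventually enters
every such interval, which is absurd.

Otherwise every step leaves behind the largest vertex of its triangle. The edge maxima then
decrease to a limit, the parallelogram law forces the two vertices opposite each edge together,
and the edge invariant `(x² - 4)(y² - 4) = (z - w)² + 8 - 4κ` tends both to `8 - 4κ` and to `0`.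
-/

lemma qnum_coe_div {a b : ℤ} (hb : 0 < b) (h : IsCoprime a b) :
    qnum ((a / b : ℚ) : QHat) = a :=
  Rat.num_div_eq_of_coprime hb (Int.isCoprime_iff_gcd_eq_one.mp h)

lemma qden_coe_div {a b : ℤ} (hb : 0 < b) (h : IsCoprime a b) :
    qden ((a / b : ℚ) : QHat) = b :=
  Rat.den_div_eq_of_coprime hb (Int.isCoprime_iff_gcd_eq_one.mp h)

lemma fareyNbr_coe_div {a b c d : ℤ} (hb : 0 < b) (hd : 0 < d) (h : b * c - a * d = 1) :
    FareyNbr ((a / b : ℚ) : QHat) ((c / d : ℚ) : QHat) := by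
  have hab : IsCoprime a b := ⟨-d, c, by linarith⟩
  have hcd : IsCoprime c d := ⟨b, -a, by linarith⟩
  rw [FareyNbr, qnum_coe_div hb hab, qden_coe_div hb hab, qnum_coe_div hd hcd,
    qden_coe_div hd hcd, show a * d - c * b = -1 by linarith]
  rfl

lemma FareyNbr.symm {x y : QHat} (h : FareyNbr x y) : FareyNbr y x := by
  rwa [FareyNbr, abs_sub_comm]

lemma max_eq_max_of_swap {α β : Type*} [LinearOrder β] (f : α → β) {p q x y : α}
    (h : p = x ∧ q = y ∨ p = y ∧ q = x) : max (f p) (f q) = max (f x) (f y) := by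
  rcases h with ⟨rfl, rfl⟩ | ⟨rfl, rfl⟩
  exacts [rfl, max_comm _ _]

lemma min_eq_min_of_swap {α β : Type*} [LinearOrder β] (f : α → β) {p q x y : α}
    (h : p = x ∧ q = y ∨ p = y ∧ q = x) : min (f p) (f q) = min (f x) (f y) := by
  rcases h with ⟨rfl, rfl⟩ | ⟨rfl, rfl⟩
  exacts [rfl, min_comm _ _]

structure FareyInterval where
  a : ℤ
  b : ℤ
  c : ℤ
  d : ℤ
  b_pos : 0 < b
  d_pos : 0 < d
  det : b * c - a * d = 1

namespace FareyInterval

variable (I : FareyInterval) (t : ℝ)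

def loQ : ℚ := I.a / I.b

def hiQ : ℚ := I.c / I.d

def medQ : ℚ := ((I.a + I.c : ℤ) : ℚ) / ((I.b + I.d : ℤ) : ℚ)

def lo : QHat := I.loQ

def hi : QHat := I.hiQ

def med : QHat := I.medQ

def left : FareyInterval :=
  ⟨I.a, I.b, I.a + I.c, I.b + I.d, I.b_pos, by linarith [I.b_pos, I.d_pos],
    by linear_combination I.det⟩

def right : FareyInterval :=
  ⟨I.a + I.c, I.b + I.d, I.c, I.d, by linarith [I.b_pos, I.d_pos], I.d_pos,
    by linear_combination I.det⟩

def Inside : Prop := t ∈ Set.Ioo (I.loQ : ℝ) I.hiQ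

lemma lo_nbr_hi : FareyNbr I.lo I.hi := fareyNbr_coe_div I.b_pos I.d_pos I.det

lemma triangle : FareyTriangle I.lo I.hi I.med :=
  ⟨I.lo_nbr_hi, I.right.lo_nbr_hi.symm, I.left.lo_nbr_hi⟩

lemma loQ_lt_medQ : I.loQ < I.medQ := by
  have := I.b_pos; have := I.d_pos
  rw [loQ, medQ, div_lt_div_iff₀ (by positivity) (by push_cast; positivity)]
  exact_mod_cast (by nlinarith [I.det] : I.a * (I.b + I.d) < (I.a + I.c) * I.b)

lemma medQ_lt_hiQ : I.medQ < I.hiQ := by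
  have := I.b_pos; have := I.d_pos
  rw [hiQ, medQ, div_lt_div_iff₀ (by push_cast; positivity) (by positivity)]
  exact_mod_cast (by nlinarith [I.det] : (I.a + I.c) * I.d < I.c * (I.b + I.d))

lemma hiQ_sub_loQ : I.hiQ - I.loQ = 1 / (I.b * I.d) := by
  have := I.b_pos; have := I.d_pos
  have h : (I.b * I.c - I.a * I.d : ℚ) = 1 := by exact_mod_cast I.det
  rw [hiQ, loQ]
  field_simp
  linear_combination h

lemma add_le_den {r : ℚ} (hr : I.Inside r) : I.b + I.d ≤ r.den := by
  have := I.b_pos; have := I.d_pos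
  obtain ⟨h₁, h₂⟩ := hr
  rw [loQ, Rat.cast_def r] at h₁
  rw [hiQ, Rat.cast_def r] at h₂
  push_cast at h₁ h₂
  rw [div_lt_div_iff₀ (by positivity) (by positivity)] at h₁ h₂
  have k₁ : I.a * r.den < r.num * I.b := by exact_mod_cast h₁
  have k₂ : r.num * I.d < I.c * r.den := by exact_mod_cast h₂
  nlinarith [I.det]

-- One step of the Stern–Brocot descent toward `t`: the half of `I` on the side of `t`, the
-- endpoint of `I` that it keeps, and the one it drops.
def toward : FareyInterval := if t < I.medQ then I.left else I.right

def kept : QHat := if t < I.medQ then I.lo else I.hi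

def dropped : QHat := if t < I.medQ then I.hi else I.lo

lemma lo_hi_eq_kept_dropped :
    I.lo = I.kept t ∧ I.hi = I.dropped t ∨ I.lo = I.dropped t ∧ I.hi = I.kept t := by
  unfold kept dropped
  split_ifs
  exacts [Or.inl ⟨rfl, rfl⟩, Or.inr ⟨rfl, rfl⟩]

lemma toward_lo_hi : (I.toward t).lo = I.kept t ∧ (I.toward t).hi = I.med ∨
    (I.toward t).lo = I.med ∧ (I.toward t).hi = I.kept t := by
  unfold toward kept
  split_ifs
  exacts [Or.inl ⟨rfl, rfl⟩, Or.inr ⟨rfl, rfl⟩]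

lemma triangle_toward : FareyTriangle (I.toward t).lo (I.toward t).hi (I.dropped t) := by
  unfold toward dropped
  split_ifs
  exacts [⟨I.left.lo_nbr_hi, I.right.lo_nbr_hi, I.lo_nbr_hi⟩,
    ⟨I.right.lo_nbr_hi, I.lo_nbr_hi.symm, I.left.lo_nbr_hi.symm⟩]

lemma med_toward_ne_dropped : (I.toward t).med ≠ I.dropped t := by
  unfold toward dropped
  split_ifs
  · exact fun h => (I.left.medQ_lt_hiQ.trans I.medQ_lt_hiQ).ne (OnePoint.coe_injective h)
  · exact fun h => (I.loQ_lt_medQ.trans I.right.loQ_lt_medQ).ne' (OnePoint.coe_injective h)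

lemma Inside.toward {I : FareyInterval} {t : ℝ} (hI : I.Inside t) (ht : t ≠ I.medQ) :
    (I.toward t).Inside t := by
  unfold FareyInterval.toward
  split_ifs with h
  exacts [⟨hI.1, h⟩, ⟨lt_of_le_of_ne (not_lt.mp h) ht.symm, hI.2⟩]

lemma add_lt_add_toward : I.b + I.d < (I.toward t).b + (I.toward t).d := by
  have := I.b_pos; have := I.d_pos
  unfold toward
  split_ifs <;> simp only [left, right] <;> omega

lemma Icc_toward_subset :
    Set.Icc (I.toward t).loQ (I.toward t).hiQ ⊆ Set.Icc I.loQ I.hiQ := by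
  unfold toward
  split_ifs
  exacts [Set.Icc_subset_Icc le_rfl I.medQ_lt_hiQ.le,
    Set.Icc_subset_Icc I.loQ_lt_medQ.le le_rfl]

/-- The Stern–Brocot descent toward `r` reaches `r` as a mediant: `b + d` increases at each step
and stays at most `r.den`. -/
theorem inside_induction (r : ℚ) {P : FareyInterval → Prop}
    (step : ∀ I : FareyInterval, I.Inside r → ((r : ℝ) ≠ I.medQ → P (I.toward r)) → P I) :
    ∀ I : FareyInterval, I.Inside r → P I := by
  suffices h : ∀ (k : ℕ) (I : FareyInterval), I.Inside r → r.den < I.b + I.d + k → P I from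
    fun I hI => h r.den I hI (by have := I.b_pos; have := I.d_pos; omega)
  intro k
  induction k with
  | zero => exact fun I hI hk => absurd (I.add_le_den hI) (by omega)
  | succ k ih =>
    refine fun I hI hk => step I hI fun hne => ih _ (hI.toward hne) ?_
    have := I.add_lt_add_toward r
    omega

def descend : ℕ → FareyInterval
  | 0 => I
  | n + 1 => (descend n).toward t

lemma descend_succ (n : ℕ) : I.descend t (n + 1) = (I.descend t n).toward t := rfl

lemma Inside.descend {I : FareyInterval} {t : ℝ} (hI : I.Inside t) (ht : Irrational t) :
    ∀ n, (I.descend t n).Inside t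
  | 0 => hI
  | n + 1 => (hI.descend ht n).toward (ht.ne_rat _)

lemma Icc_descend_subset :
    ∀ n, Set.Icc (I.descend t n).loQ (I.descend t n).hiQ ⊆ Set.Icc I.loQ I.hiQ
  | 0 => subset_rfl
  | n + 1 => ((I.descend t n).Icc_toward_subset t).trans (Icc_descend_subset n)

lemma add_add_le_descend : ∀ n : ℕ, I.b + I.d + n ≤ (I.descend t n).b + (I.descend t n).d
  | 0 => by simp [descend]
  | n + 1 => by
    have := add_add_le_descend n
    have := (I.descend t n).add_lt_add_toward t
    rw [descend_succ]
    push_cast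
    omega

def floor (ℓ : ℝ) : FareyInterval := ⟨⌊ℓ⌋, 1, ⌊ℓ⌋ + 1, 1, one_pos, one_pos, by ring⟩

lemma inside_floor {ℓ : ℝ} (hℓ : Irrational ℓ) : (floor ℓ).Inside ℓ := by
  simp only [Inside, floor, loQ, hiQ, Set.mem_Ioo]
  push_cast
  rw [div_one, div_one]
  exact ⟨(Int.floor_le ℓ).lt_of_ne (hℓ.ne_int _).symm, Int.lt_floor_add_one ℓ⟩

lemma exists_inside_hiQ_sub_loQ_lt {ℓ δ : ℝ} (hℓ : Irrational ℓ) (hδ : 0 < δ) :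
    ∃ I : FareyInterval, I.Inside ℓ ∧ ((I.hiQ - I.loQ : ℚ) : ℝ) < δ := by
  obtain ⟨n, hn⟩ := exists_nat_one_div_lt hδ
  set I := (floor ℓ).descend ℓ n
  refine ⟨I, (inside_floor hℓ).descend hℓ n, lt_of_le_of_lt ?_ hn⟩
  have hden : 1 + 1 + (n : ℤ) ≤ I.b + I.d := (floor ℓ).add_add_le_descend ℓ n
  have hb := I.b_pos
  have hd := I.d_pos
  have hbd : (n : ℤ) + 1 ≤ I.b * I.d := by nlinarith
  rw [I.hiQ_sub_loQ]
  push_cast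
  gcongr
  exact_mod_cast hbd

end FareyInterval

lemma max_mul_min_sub_one_le_norm {u v w z : ℂ} (hz : z + w = u * v)
    (hw : ‖w‖ ≤ max ‖u‖ ‖v‖) : max ‖u‖ ‖v‖ * (min ‖u‖ ‖v‖ - 1) ≤ ‖z‖ := by
  have h : ‖u * v‖ - ‖w‖ ≤ ‖z‖ := by
    simpa [show z = u * v - w by linear_combination hz] using norm_sub_norm_le (u * v) w
  rw [norm_mul, ← min_mul_max] at h
  nlinarith

lemma max_lt_norm_of_edge {u v w z : ℂ} (hz : z + w = u * v) (hmin : 2 < min ‖u‖ ‖v‖)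
    (hw : ‖w‖ ≤ max ‖u‖ ‖v‖) : max ‖u‖ ‖v‖ < ‖z‖ := by
  have := max_mul_min_sub_one_le_norm hz hw
  nlinarith [min_le_max (a := ‖u‖) (b := ‖v‖)]

section

variable {κ : ℂ} {φ : QHat → ℂ}

/-- Bowditch's growth lemma, by induction along the descent toward `r`: each mediant exceeds
the maximum of its edge, so the hypotheses pass on to the next edge. -/
theorem FareyInterval.max_lt_norm_of_inside (hφ : IsFricke κ φ) {I : FareyInterval} {w : QHat}
    (hw : FareyTriangle I.lo I.hi w) (hmed : I.med ≠ w) (hmin : 2 < min ‖φ I.lo‖ ‖φ I.hi‖)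
    (hmax : ‖φ w‖ ≤ max ‖φ I.lo‖ ‖φ I.hi‖) {r : ℚ} (hr : I.Inside r) :
    max ‖φ I.lo‖ ‖φ I.hi‖ < ‖φ r‖ := by
  refine FareyInterval.inside_induction r (P := fun I => ∀ w, FareyTriangle I.lo I.hi w →
    I.med ≠ w → 2 < min ‖φ I.lo‖ ‖φ I.hi‖ → ‖φ w‖ ≤ max ‖φ I.lo‖ ‖φ I.hi‖ →
    max ‖φ I.lo‖ ‖φ I.hi‖ < ‖φ r‖) ?_ I hr w hw hmed hmin hmax
  intro I _ ih w hw hmed hmin hmax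
  have hgrow := max_lt_norm_of_edge (hφ.2 _ _ _ _ I.triangle hw hmed) hmin hmax
  by_cases hr : (r : ℝ) = I.medQ
  · rwa [show (r : QHat) = I.med from congrArg _ (Rat.cast_injective hr)]
  have hJ := I.toward_lo_hi r
  have hI := I.lo_hi_eq_kept_dropped r
  rw [min_eq_min_of_swap (‖φ ·‖) hI] at hmin
  rw [max_eq_max_of_swap (‖φ ·‖) hI] at hmax hgrow ⊢
  rw [min_eq_min_of_swap (‖φ ·‖) hJ, max_eq_max_of_swap (‖φ ·‖) hJ] at ih
  have hmed_le := le_max_right ‖φ (I.kept r)‖ ‖φ I.med‖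
  refine hgrow.trans (hmed_le.trans_lt (ih hr _ (I.triangle_toward r)
    (I.med_toward_ne_dropped r) ?_ ?_))
  · exact lt_min (hmin.trans_le (min_le_left _ _)) ((hmin.trans_le min_le_max).trans hgrow)
  · exact (le_max_right _ _).trans (hgrow.le.trans hmed_le)

end

/-- Values of a Fricke trace map along a path of Farey triangles `{x n, y n, z n}`, each
crossing the edge `{x n, z n}` into the next one: `y n` is the vertex left behind, so the edge
`{x (n+1), y (n+1)}` has `y n` and `z (n+1)` as opposite vertices. -/
structure FareyDescent (κ : ℂ) where
  x : ℕ → ℂ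
  y : ℕ → ℂ
  z : ℕ → ℂ
  vertex : ∀ n, x (n + 1) ^ 2 + y (n + 1) ^ 2 + y n ^ 2 - x (n + 1) * y (n + 1) * y n - 2 = κ
  edge : ∀ n, z (n + 1) + y n = x (n + 1) * y (n + 1)
  next : ∀ n, x (n + 1) = x n ∧ y (n + 1) = z n ∨ x (n + 1) = z n ∧ y (n + 1) = x n

lemma norm_sq_sub_four_le {u : ℂ} {C : ℝ} (h : ‖u‖ ≤ C) : ‖u ^ 2 - 4‖ ≤ C ^ 2 + 4 := by
  calc ‖u ^ 2 - 4‖ ≤ ‖u ^ 2‖ + ‖(4 : ℂ)‖ := norm_sub_le _ _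
    _ = ‖u‖ ^ 2 + 4 := by rw [norm_pow]; norm_num
    _ ≤ C ^ 2 + 4 := by gcongr

namespace FareyDescent

variable {κ : ℂ} (D : FareyDescent κ)

def edgeMax (n : ℕ) : ℝ := max ‖D.x n‖ ‖D.y n‖

def edgeMin (n : ℕ) : ℝ := min ‖D.x n‖ ‖D.y n‖

lemma edgeMax_succ (n : ℕ) : D.edgeMax (n + 1) = max ‖D.x n‖ ‖D.z n‖ :=
  max_eq_max_of_swap _ (D.next n)

lemma edgeMin_succ (n : ℕ) : D.edgeMin (n + 1) = min ‖D.x n‖ ‖D.z n‖ :=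
  min_eq_min_of_swap _ (D.next n)

lemma succ_of_norm_y_le_edgeMax (n : ℕ) (hmin : 2 < D.edgeMin (n + 1))
    (h : ‖D.y n‖ ≤ D.edgeMax (n + 1)) :
    ‖D.y (n + 1)‖ ≤ D.edgeMax (n + 1 + 1) ∧ D.edgeMin (n + 1) ≤ D.edgeMin (n + 1 + 1) ∧
      D.edgeMax (n + 1) + 2 * (D.edgeMin (n + 1) - 2) ≤ D.edgeMax (n + 1 + 1) := by
  have hz : D.edgeMax (n + 1) * (D.edgeMin (n + 1) - 1) ≤ ‖D.z (n + 1)‖ :=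
    max_mul_min_sub_one_le_norm (D.edge n) h
  have hmM : D.edgeMin (n + 1) ≤ D.edgeMax (n + 1) := min_le_max
  have hgain : D.edgeMax (n + 1) + 2 * (D.edgeMin (n + 1) - 2) ≤ ‖D.z (n + 1)‖ := by nlinarith
  have hy : ‖D.y (n + 1)‖ ≤ D.edgeMax (n + 1) := le_max_right _ _
  have hx : D.edgeMin (n + 1) ≤ ‖D.x (n + 1)‖ := min_le_left _ _
  have hzM := le_max_right ‖D.x (n + 1)‖ ‖D.z (n + 1)‖
  rw [D.edgeMax_succ (n + 1), D.edgeMin_succ (n + 1)]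
  exact ⟨by linarith, le_min hx (by linarith), by linarith⟩

theorem exists_lt_edgeMax_of_norm_y_le (hmin : ∀ n, 2 < D.edgeMin n) {n₀ : ℕ}
    (h₀ : ‖D.y n₀‖ ≤ D.edgeMax (n₀ + 1)) (K : ℝ) :
    ∃ n, ‖D.y n‖ ≤ D.edgeMax (n + 1) ∧ K < D.edgeMax (n + 1) := by
  set c := 2 * (D.edgeMin (n₀ + 1) - 2)
  have hc : 0 < c := by linarith [hmin (n₀ + 1)]
  have key : ∀ j : ℕ, ‖D.y (n₀ + j)‖ ≤ D.edgeMax (n₀ + j + 1) ∧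
      D.edgeMin (n₀ + 1) ≤ D.edgeMin (n₀ + j + 1) ∧
      D.edgeMax (n₀ + 1) + j * c ≤ D.edgeMax (n₀ + j + 1) := by
    intro j
    induction j with
    | zero => simpa using h₀
    | succ j ih =>
      rw [← add_assoc]
      obtain ⟨k₁, k₂, k₃⟩ := D.succ_of_norm_y_le_edgeMax (n₀ + j) (hmin _) ih.1
      refine ⟨k₁, ih.2.1.trans k₂, ?_⟩
      push_cast
      linarith [ih.2.1, ih.2.2]
  obtain ⟨j, hj⟩ := exists_nat_gt ((K - D.edgeMax (n₀ + 1)) / c)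
  rw [div_lt_iff₀ hc] at hj
  exact ⟨n₀ + j, (key j).1, by linarith [(key j).2.2]⟩

lemma norm_lt_norm_y (h : ∀ n, D.edgeMax (n + 1) < ‖D.y n‖) (n : ℕ) :
    ‖D.x n‖ < ‖D.y n‖ ∧ ‖D.z n‖ < ‖D.y n‖ ∧ ‖D.y (n + 1)‖ < ‖D.y n‖ := by
  have hxz := D.edgeMax_succ n ▸ h n
  exact ⟨(le_max_left _ _).trans_lt hxz, (le_max_right _ _).trans_lt hxz,
    (le_max_right _ _).trans_lt (h n)⟩

theorem tendsto_z_succ_sub_y (hmin : ∀ n, 2 < D.edgeMin n)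
    (h : ∀ n, D.edgeMax (n + 1) < ‖D.y n‖) :
    Tendsto (fun n => D.z (n + 1) - D.y n) atTop (𝓝 0) := by
  have hanti : Antitone (fun n => ‖D.y n‖) :=
    antitone_nat_of_succ_le fun n => (D.norm_lt_norm_y h n).2.2.le
  have hM := tendsto_atTop_ciInf hanti ⟨0, by rintro _ ⟨n, rfl⟩; positivity⟩
  -- the parallelogram law, with `z (n+1) + y n = x (n+1) y (n+1)` and `|x (n+1)| > 2`
  have hbound : ∀ n, ‖D.z (n + 1) - D.y n‖ ^ 2 ≤ 2 * (‖D.y n‖ ^ 2 - ‖D.y (n + 1)‖ ^ 2) := by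
    intro n
    have hpar := parallelogram_law_with_norm ℂ (D.z (n + 1)) (D.y n)
    have hx : 2 < ‖D.x (n + 1)‖ := (hmin (n + 1)).trans_le (min_le_left _ _)
    have hsum : 2 * ‖D.y (n + 1)‖ ≤ ‖D.z (n + 1) + D.y n‖ := by
      rw [D.edge n, norm_mul]
      nlinarith [norm_nonneg (D.y (n + 1))]
    have hz := (D.norm_lt_norm_y h (n + 1)).2.1
    nlinarith [norm_nonneg (D.z (n + 1)), norm_nonneg (D.y (n + 1))]
  have hsq : Tendsto (fun n => ‖D.z (n + 1) - D.y n‖ ^ 2) atTop (𝓝 0) := by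
    refine squeeze_zero (fun _ => by positivity) hbound ?_
    simpa using ((hM.pow 2).sub ((hM.comp (tendsto_add_atTop_nat 1)).pow 2)).const_mul 2
  refine tendsto_zero_iff_norm_tendsto_zero.mpr ?_
  simpa [Real.sqrt_sq (norm_nonneg _)] using hsq.sqrt

def edgeInv (n : ℕ) : ℂ := (D.x n ^ 2 - 4) * (D.y n ^ 2 - 4)

lemma edgeInv_succ (n : ℕ) : D.edgeInv (n + 1) = (D.z (n + 1) - D.y n) ^ 2 + (8 - 4 * κ) := by
  rw [edgeInv]
  linear_combination (3 * D.y n - D.z (n + 1) - D.x (n + 1) * D.y (n + 1)) * D.edge n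
    - 4 * D.vertex n

lemma sq_mul_sq_eq (n : ℕ) : (D.x (n + 1) ^ 2 - 4) ^ 2 * D.y (n + 1) ^ 2 =
    4 * (D.edgeInv (n + 1 + 1) - D.edgeInv (n + 1)) - (D.z (n + 1) - D.y n) *
      ((D.x (n + 1) ^ 2 - 4) * (2 * D.x (n + 1) * D.y (n + 1) + (D.z (n + 1) - D.y n))) := by
  have h : D.edgeInv (n + 1 + 1) = (D.x (n + 1) ^ 2 - 4) * (D.z (n + 1) ^ 2 - 4) := by
    rcases D.next (n + 1) with ⟨h₁, h₂⟩ | ⟨h₁, h₂⟩ <;> simp only [edgeInv, h₁, h₂]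
    ring
  rw [h, edgeInv]
  linear_combination
    (4 - D.x (n + 1) ^ 2) * (D.x (n + 1) * D.y (n + 1) + 3 * D.z (n + 1) - D.y n) * D.edge n

/-- The edge invariants tend to `8 - 4κ` (`edgeInv_succ`); comparing consecutive edges
(`sq_mul_sq_eq`) forces `x² → 4`, so that limit is `0`. -/
theorem eq_two_of_tendsto_z_succ_sub_y {C : ℝ} (hx : ∀ n, ‖D.x n‖ ≤ C) (hy : ∀ n, ‖D.y n‖ ≤ C)
    (hz : ∀ n, ‖D.z n‖ ≤ C) (hy₂ : ∀ n, 2 ≤ ‖D.y n‖)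
    (hε : Tendsto (fun n => D.z (n + 1) - D.y n) atTop (𝓝 0)) : κ = 2 := by
  have hI : Tendsto (fun n => D.edgeInv (n + 1)) atTop (𝓝 (8 - 4 * κ)) := by
    simpa [edgeInv_succ] using (hε.pow 2).add_const (8 - 4 * κ)
  have hbdd : IsBoundedUnder (· ≤ ·) atTop fun n => ‖(D.x (n + 1) ^ 2 - 4) *
      (2 * D.x (n + 1) * D.y (n + 1) + (D.z (n + 1) - D.y n))‖ := by
    refine isBoundedUnder_of ⟨(C ^ 2 + 4) * (2 * C * C + (C + C)), fun n => ?_⟩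
    rw [norm_mul]
    gcongr
    · exact norm_sq_sub_four_le (hx _)
    refine (norm_add_le _ _).trans
      (add_le_add ?_ ((norm_sub_le _ _).trans (add_le_add (hz _) (hy _))))
    rw [norm_mul, norm_mul, Complex.norm_two]
    nlinarith [hx (n + 1), hy (n + 1), norm_nonneg (D.x (n + 1)), norm_nonneg (D.y (n + 1))]
  have hxy : Tendsto (fun n => (D.x (n + 1) ^ 2 - 4) ^ 2 * D.y (n + 1) ^ 2) atTop (𝓝 0) := by
    simpa [sq_mul_sq_eq] using (((hI.comp (tendsto_add_atTop_nat 1)).sub hI).const_mul 4).sub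
      (hε.zero_mul_isBoundedUnder_le hbdd)
  have hx₄ : Tendsto (fun n => (D.x (n + 1) ^ 2 - 4) ^ 2) atTop (𝓝 0) := by
    refine squeeze_zero_norm (fun n => ?_) (tendsto_zero_iff_norm_tendsto_zero.mp hxy)
    have : 1 ≤ ‖D.y (n + 1) ^ 2‖ := by rw [norm_pow]; nlinarith [hy₂ (n + 1)]
    rw [norm_mul]
    nlinarith [norm_nonneg ((D.x (n + 1) ^ 2 - 4) ^ 2)]
  have hI₂ : Tendsto (fun n => D.edgeInv (n + 1) ^ 2) atTop (𝓝 0) := by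
    have hb : IsBoundedUnder (· ≤ ·) atTop ((‖·‖) ∘ fun n => (D.y (n + 1) ^ 2 - 4) ^ 2) :=
      isBoundedUnder_of ⟨(C ^ 2 + 4) ^ 2, fun n => by
        simpa [norm_pow] using pow_le_pow_left₀ (norm_nonneg _) (norm_sq_sub_four_le (hy _)) 2⟩
    exact (hx₄.zero_mul_isBoundedUnder_le hb).congr fun n => by rw [edgeInv]; ring
  have h := pow_eq_zero_iff two_ne_zero |>.mp (tendsto_nhds_unique (hI.pow 2) hI₂)
  linear_combination (-1 / 4 : ℂ) * h

theorem exists_le_edgeMax_and_lt (hκ : κ ≠ 2) (hmin : ∀ n, 2 < D.edgeMin n) (K : ℝ) :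
    ∃ n, ‖D.y n‖ ≤ D.edgeMax (n + 1) ∧ K < D.edgeMax (n + 1) := by
  by_cases h : ∃ n₀, ‖D.y n₀‖ ≤ D.edgeMax (n₀ + 1)
  · obtain ⟨n₀, h₀⟩ := h
    exact D.exists_lt_edgeMax_of_norm_y_le hmin h₀ K
  push Not at h
  have hlt := D.norm_lt_norm_y h
  have hdecr : ∀ n, ‖D.y n‖ ≤ ‖D.y 0‖ := fun n =>
    antitone_nat_of_succ_le (f := (‖D.y ·‖)) (fun n => (hlt n).2.2.le) (Nat.zero_le n)
  exact absurd (D.eq_two_of_tendsto_z_succ_sub_y (fun n => (hlt n).1.le.trans (hdecr n)) hdecr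
    (fun n => (hlt n).2.1.le.trans (hdecr n)) (fun n => (hmin n).le.trans (min_le_right _ _))
    (D.tendsto_z_succ_sub_y hmin h)) hκ

end FareyDescent

namespace FareyInterval

variable (I : FareyInterval) (t : ℝ) {κ : ℂ} {φ : QHat → ℂ}

def fareyDescent (hφ : IsFricke κ φ) : FareyDescent κ where
  x n := φ ((I.descend t n).kept t)
  y n := φ ((I.descend t n).dropped t)
  z n := φ (I.descend t n).med
  vertex n := by
    have h := hφ.1 _ _ _ ((I.descend t n).triangle_toward t)
    rw [← descend_succ] at h
    rcases (I.descend t (n + 1)).lo_hi_eq_kept_dropped t with ⟨h₁, h₂⟩ | ⟨h₁, h₂⟩ <;>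
      rw [h₁, h₂] at h <;> linear_combination h
  edge n := by
    have h := hφ.2 _ _ _ _ (I.descend t (n + 1)).triangle ((I.descend t n).triangle_toward t)
      ((I.descend t n).med_toward_ne_dropped t)
    rcases (I.descend t (n + 1)).lo_hi_eq_kept_dropped t with ⟨h₁, h₂⟩ | ⟨h₁, h₂⟩ <;>
      rw [h₁, h₂] at h <;> linear_combination h
  next n := by
    rw [descend_succ]
    rcases ((I.descend t n).toward t).lo_hi_eq_kept_dropped t with ⟨h₁, h₂⟩ | ⟨h₁, h₂⟩ <;>
      rcases (I.descend t n).toward_lo_hi t with ⟨h₃, h₄⟩ | ⟨h₃, h₄⟩ <;>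
      simp [← h₁, ← h₂, h₃, h₄]

lemma fareyDescent_edgeMax (hφ : IsFricke κ φ) (n : ℕ) :
    (I.fareyDescent t hφ).edgeMax n = max ‖φ (I.descend t n).lo‖ ‖φ (I.descend t n).hi‖ :=
  (max_eq_max_of_swap (‖φ ·‖) ((I.descend t n).lo_hi_eq_kept_dropped t)).symm

lemma fareyDescent_edgeMin (hφ : IsFricke κ φ) (n : ℕ) :
    (I.fareyDescent t hφ).edgeMin n = min ‖φ (I.descend t n).lo‖ ‖φ (I.descend t n).hi‖ :=
  (min_eq_min_of_swap (‖φ ·‖) ((I.descend t n).lo_hi_eq_kept_dropped t)).symm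

end FareyInterval

lemma exists_eq_coe_mem_of_tendsto {X : ℕ → QHat} {ℓ : ℝ}
    (hX : Tendsto (fun n => toRHat (X n)) atTop (𝓝 (ℓ : RHat))) {U : Set ℝ} (hU : IsOpen U)
    (hℓ : ℓ ∈ U) : ∃ m, ∃ r : ℚ, X m = r ∧ (r : ℝ) ∈ U := by
  have hV : IsOpen (((↑) : ℝ → RHat) '' U) := OnePoint.isOpenEmbedding_coe.isOpenMap U hU
  obtain ⟨m, u, hu, hm⟩ := (hX.eventually (hV.mem_nhds ⟨ℓ, hℓ, rfl⟩)).exists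
  induction hXm : X m using OnePoint.rec with
  | infty => rw [hXm] at hm; exact absurd hm (OnePoint.coe_ne_infty u)
  | coe r =>
    rw [hXm] at hm
    have hur : u = r := OnePoint.coe_injective hm
    exact ⟨m, r, hXm, hur ▸ hu⟩

lemma exists_injective_tendsto {α : Type*} (f : α → ℝ) {ℓ : ℝ} (hf : ∀ a, f a ≠ ℓ)
    (h : ∀ δ > 0, ∃ a, |f a - ℓ| < δ) :
    ∃ s : ℕ → α, Function.Injective s ∧ Tendsto (f ∘ s) atTop (𝓝 ℓ) := by
  have hpos : ∀ a, 0 < |f a - ℓ| := fun a => abs_pos.2 (sub_ne_zero.2 (hf a))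
  choose g hg using fun (n : ℕ) (a : α) =>
    h _ (lt_min (hpos a) (Nat.one_div_pos_of_nat (n := n) (α := ℝ)))
  obtain ⟨a₀, -⟩ := h 1 one_pos
  let s : ℕ → α := fun n => Nat.rec a₀ g n
  have hs : ∀ n, |f (s (n + 1)) - ℓ| < min |f (s n) - ℓ| (1 / (n + 1)) := fun n => hg n (s n)
  have hanti : StrictAnti fun n => |f (s n) - ℓ| :=
    strictAnti_nat_of_succ_lt fun n => (hs n).trans_le (min_le_left _ _)
  refine ⟨s, fun m n hmn => hanti.injective (congrArg (fun a => |f a - ℓ|) hmn), ?_⟩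
  rw [← tendsto_add_atTop_iff_nat 1, tendsto_iff_dist_tendsto_zero]
  exact squeeze_zero (fun _ => dist_nonneg)
    (fun n => ((Real.dist_eq _ _).trans_lt (hs n)).le.trans (min_le_right _ _))
    tendsto_one_div_add_atTop_nhds_zero_nat

section

variable {κ : ℂ} {φ : QHat → ℂ}

theorem FareyInterval.exists_norm_le_two (hκ : κ ≠ 2) (hφ : IsFricke κ φ) {ℓ : ℝ}
    (hℓ : Irrational ℓ) {I : FareyInterval} (hI : I.Inside ℓ) {X : ℕ → QHat} {K : ℝ}
    (hX : Tendsto (fun n => toRHat (X n)) atTop (𝓝 (ℓ : RHat))) (hK : ∀ n, ‖φ (X n)‖ ≤ K) :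
    ∃ r ∈ Set.Icc I.loQ I.hiQ, ‖φ r‖ ≤ 2 := by
  by_contra! h
  set D := I.fareyDescent ℓ hφ
  have hmin : ∀ n, 2 < D.edgeMin n := fun n => by
    have hsub := I.Icc_descend_subset ℓ n
    have hle := (I.descend ℓ n).loQ_lt_medQ.le.trans (I.descend ℓ n).medQ_lt_hiQ.le
    rw [I.fareyDescent_edgeMin]
    exact lt_min (h _ (hsub ⟨le_rfl, hle⟩)) (h _ (hsub ⟨hle, le_rfl⟩))
  obtain ⟨n, hn, hKn⟩ := D.exists_le_edgeMax_and_lt hκ hmin K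
  obtain ⟨m, r, hXm, hr⟩ := exists_eq_coe_mem_of_tendsto hX isOpen_Ioo (hI.descend hℓ (n + 1))
  rw [I.fareyDescent_edgeMax] at hn hKn
  have hmin' := hmin (n + 1)
  rw [I.fareyDescent_edgeMin] at hmin'
  -- `|φ| > K` strictly inside the `(n+1)`-st interval, where some `X m` lies
  have := (I.descend ℓ (n + 1)).max_lt_norm_of_inside hφ ((I.descend ℓ n).triangle_toward ℓ)
    ((I.descend ℓ n).med_toward_ne_dropped ℓ) hmin' hn hr
  linarith [hXm ▸ hK m]

theorem exists_abs_sub_lt_norm_le_two (hκ : κ ≠ 2) (hφ : IsFricke κ φ) {ℓ : ℝ}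
    (hℓ : Irrational ℓ) {X : ℕ → QHat} {K : ℝ}
    (hX : Tendsto (fun n => toRHat (X n)) atTop (𝓝 (ℓ : RHat))) (hK : ∀ n, ‖φ (X n)‖ ≤ K)
    {δ : ℝ} (hδ : 0 < δ) : ∃ r : ℚ, ‖φ r‖ ≤ 2 ∧ |(r : ℝ) - ℓ| < δ := by
  obtain ⟨I, hI, hδI⟩ := FareyInterval.exists_inside_hiQ_sub_loQ_lt hℓ hδ
  obtain ⟨r, ⟨hlo, hhi⟩, hr⟩ := I.exists_norm_le_two hκ hφ hℓ hI hX hK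
  have hlo' : (I.loQ : ℝ) ≤ r := by exact_mod_cast hlo
  have hhi' : (r : ℝ) ≤ I.hiQ := by exact_mod_cast hhi
  push_cast at hδI
  exact ⟨r, hr, abs_sub_lt_iff.2 ⟨by linarith [hI.1], by linarith [hI.2]⟩⟩

end

/-- For `κ ≠ 2`, an irrational end invariant `λ` of `φ` is the limit
of pairwise distinct `Z_n ∈ ℚ̂` with `|φ(Z_n)| ≤ 2`. -/
theorem irrational_end_invariant (κ : ℂ) (hκ : κ ≠ 2) (φ : QHat → ℂ)
    (hφ : IsFricke κ φ) (lam : RHat) (hlam : lam ∈ endInvs φ)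
    (hirr : lam ∉ Set.range toRHat) :
    ∃ s : ℕ → QHat, Function.Injective s ∧
      Tendsto (fun n => toRHat (s n)) atTop (nhds lam) ∧
      ∀ n, ‖φ (s n)‖ ≤ 2 := by
  obtain ⟨K, -, X, -, hX, hK⟩ := hlam
  induction lam using OnePoint.rec with
  | infty => exact absurd ⟨OnePoint.infty, rfl⟩ hirr
  | coe ℓ =>
    have hℓ : Irrational ℓ := fun ⟨q, hq⟩ => hirr ⟨q, congrArg _ hq⟩
    obtain ⟨s, hs, hlim⟩ := exists_injective_tendsto (fun r : {r : ℚ // ‖φ r‖ ≤ 2} => (r : ℝ))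
      (fun r => (hℓ.ne_rat r).symm) fun δ hδ => by
        obtain ⟨r, hr, hrδ⟩ := exists_abs_sub_lt_norm_le_two hκ hφ hℓ hX hK hδ
        exact ⟨⟨r, hr⟩, hrδ⟩
    exact ⟨fun n => (s n : ℚ), OnePoint.coe_injective.comp (Subtype.val_injective.comp hs),
      (OnePoint.continuous_coe.tendsto ℓ).comp hlim, fun n => (s n).2⟩

end TWZ
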